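/- Base shift for Bailey pairs: Suppose (α'_n)_{n≥0}, (β_n)_{n≥0} form a Bailey pair with respect to base a, and suppose a q^m ≠ 1 for all integers m ≥ 1. Then a sequence (α_n)_{n≥0} is such that (α_n), (β_n) form a Bailey pair with respect to base aq if and only if for all n ≥ 0: ((1 − aq)/(1 − a q^{2n+1})) α_n = Σ_{r=0}^{n} a^{n−r} q^{n²−r²} α'_r. Moreover, this last condition holds if and only if the sequence ã_n := ((1 − aq)/(1 − a q^{2n+1})) α_n satisfies ã_0 = α'_0 and ã_{n+1} = a q^{2n+1} ã_n + α'_{n+1} for all n ≥ 0. -/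

import Mathlib

open Finset

noncomputable def qPoch (a q : ℂ) (n : ℕ) : ℂ :=
  ∏ t ∈ Finset.range n, (1 - a * q ^ t)

noncomputable def qPochInf (a q : ℂ) : ℂ :=
  ∏' t : ℕ, (1 - a * q ^ t)

def IsBaileyPair (q a : ℂ) (α β : ℕ → ℂ) : Prop :=
  ∀ n : ℕ, β n =
    ∑ t ∈ Finset.range (n + 1), α t / (qPoch q q (n - t) * qPoch (a * q) q (n + t))

/-! Writing `ã_n = (1 - aq) / (1 - aq^{2n+1}) α_n` and `α'_n = ã_n - a q^{2n-1} ã_{n-1}`, an Abel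
summation turns the Bailey sum of `α'` for base `a` into the Bailey sum of `α` for base `aq`,
because `w_t - a q^{2t+1} w_{t+1} = (1 - a q^{2t+1}) / ((q)_{n-t} (aq)_{n+t+1})` for the weights
`w_t = 1 / ((q)_{n-t} (aq)_{n+t})`. As the Bailey sums are triangular with invertible diagonal,
`α'` is the unique sequence forming a Bailey pair with `β` for base `a`, and unrolling the recurrence
`ã_n = a q^{2n-1} ã_{n-1} + α'_n` gives the closed form. -/

lemma qPoch_zero (a q : ℂ) : qPoch a q 0 = 1 := prod_range_zero _

lemma qPoch_succ (a q : ℂ) (n : ℕ) : qPoch a q (n + 1) = qPoch a q n * (1 - a * q ^ n) :=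
  prod_range_succ _ _

lemma qPoch_succ' (a q : ℂ) (n : ℕ) : qPoch a q (n + 1) = (1 - a) * qPoch (a * q) q n := by
  simp only [qPoch, prod_range_succ', pow_zero, mul_one, pow_succ, mul_assoc, mul_comm]

lemma one_sub_mul_qPoch_mul (a q : ℂ) (n : ℕ) :
    (1 - a) * qPoch (a * q) q n = qPoch a q n * (1 - a * q ^ n) := by
  rw [← qPoch_succ, qPoch_succ']

lemma qPoch_ne_zero {a q : ℂ} {n : ℕ} (h : ∀ t < n, a * q ^ t ≠ 1) : qPoch a q n ≠ 0 :=
  prod_ne_zero_iff.mpr fun t ht => sub_ne_zero.mpr (h t (mem_range.mp ht)).symm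

def shiftDiff {R : Type*} [Ring R] (ρ x : ℕ → R) : ℕ → R
  | 0 => x 0
  | n + 1 => x (n + 1) - ρ n * x n

lemma shiftDiff_eq_iff {R : Type*} [Ring R] (ρ x y : ℕ → R) :
    shiftDiff ρ x = y ↔ x 0 = y 0 ∧ ∀ n, x (n + 1) = ρ n * x n + y (n + 1) := by
  constructor
  · rintro rfl
    exact ⟨rfl, fun n => (add_sub_cancel _ _).symm⟩
  · rintro ⟨h0, hsucc⟩
    funext n
    cases n with
    | zero => exact h0
    | succ n => rw [shiftDiff, hsucc, add_sub_cancel_left]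

lemma sum_shiftDiff_mul {R : Type*} [CommRing R] (ρ x w : ℕ → R) (n : ℕ) :
    ∑ t ∈ range (n + 1), shiftDiff ρ x t * w t =
      ∑ t ∈ range n, x t * (w t - ρ t * w (t + 1)) + x n * w n := by
  induction n with
  | zero => simp [shiftDiff]
  | succ n ih =>
    rw [sum_range_succ, ih, sum_range_succ, shiftDiff]
    ring

lemma eq_sum_iff_recurrence (a q : ℂ) (x y : ℕ → ℂ) :
    (∀ n, x n = ∑ r ∈ range (n + 1), a ^ (n - r) * q ^ (n ^ 2 - r ^ 2) * y r) ↔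
      x 0 = y 0 ∧ ∀ n, x (n + 1) = a * q ^ (2 * n + 1) * x n + y (n + 1) := by
  have hstep : ∀ n, ∑ r ∈ range (n + 2), a ^ (n + 1 - r) * q ^ ((n + 1) ^ 2 - r ^ 2) * y r =
      a * q ^ (2 * n + 1) * ∑ r ∈ range (n + 1), a ^ (n - r) * q ^ (n ^ 2 - r ^ 2) * y r +
        y (n + 1) := by
    intro n
    rw [sum_range_succ, mul_sum]
    simp only [Nat.sub_self, pow_zero, one_mul]
    refine congrArg (· + y (n + 1)) (sum_congr rfl fun r hr => ?_)
    have hrn : r ≤ n := Nat.lt_succ_iff.mp (mem_range.mp hr)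
    have hsq : r ^ 2 ≤ n ^ 2 := Nat.pow_le_pow_left hrn 2
    rw [show n + 1 - r = n - r + 1 by omega,
      show (n + 1) ^ 2 - r ^ 2 = n ^ 2 - r ^ 2 + (2 * n + 1) by rw [add_sq]; omega]
    ring
  constructor
  · intro hx
    exact ⟨by simpa using hx 0, fun n => by rw [hx (n + 1), hx n, hstep]⟩
  · rintro ⟨h0, hrec⟩ n
    induction n with
    | zero => simpa using h0
    | succ n ih => rw [hrec n, ih, hstep]

lemma IsBaileyPair.unique {q a : ℂ} (ha : ∀ n, qPoch (a * q) q n ≠ 0)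
    {α₁ α₂ β : ℕ → ℂ} (h₁ : IsBaileyPair q a α₁ β) (h₂ : IsBaileyPair q a α₂ β) : α₁ = α₂ := by
  funext n
  induction n using Nat.strong_induction_on with
  | _ n ih =>
    have hlower : ∑ t ∈ range n, α₁ t / (qPoch q q (n - t) * qPoch (a * q) q (n + t)) =
        ∑ t ∈ range n, α₂ t / (qPoch q q (n - t) * qPoch (a * q) q (n + t)) :=
      sum_congr rfl fun t ht => by rw [ih t (mem_range.mp ht)]
    have hdiag := (h₁ n).symm.trans (h₂ n)
    rw [sum_range_succ, sum_range_succ, hlower, add_right_inj,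
      div_left_inj' (mul_ne_zero (by simp [qPoch_zero]) (ha _))] at hdiag
    exact hdiag

section BaseShift

variable {q a : ℂ} (hq : ∀ m : ℕ, 1 ≤ m → q ^ m ≠ 1) (ha : ∀ m : ℕ, 1 ≤ m → a * q ^ m ≠ 1)

include ha in
lemma qPoch_mul_ne_zero (n : ℕ) : qPoch (a * q) q n ≠ 0 :=
  qPoch_ne_zero fun t _ => by rw [mul_assoc, ← pow_succ']; exact ha _ t.succ_pos

include ha in
lemma one_sub_mul_pow_ne_zero {m : ℕ} (hm : 1 ≤ m) : 1 - a * q ^ m ≠ 0 :=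
  sub_ne_zero.mpr (ha m hm).symm

include ha in
lemma one_sub_mul_ne_zero : 1 - a * q ≠ 0 := by
  simpa using one_sub_mul_pow_ne_zero ha le_rfl

include ha in
lemma one_sub_mul_mul_pow_ne_zero (m : ℕ) : 1 - a * q * q ^ m ≠ 0 := by
  simpa only [mul_assoc, ← pow_succ'] using one_sub_mul_pow_ne_zero ha m.succ_pos

include hq in
lemma qPoch_self_ne_zero (n : ℕ) : qPoch q q n ≠ 0 :=
  qPoch_ne_zero fun t _ => by rw [← pow_succ']; exact hq _ t.succ_pos

include hq ha in
lemma weight_sub_weight_succ (t k : ℕ) :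
    (1 - a * q) / (1 - a * q ^ (2 * t + 1)) *
      (1 / (qPoch q q (k + 1) * qPoch (a * q) q (2 * t + k + 1)) -
        a * q ^ (2 * t + 1) * (1 / (qPoch q q k * qPoch (a * q) q (2 * t + k + 2)))) =
      1 / (qPoch q q (k + 1) * qPoch (a * q * q) q (2 * t + k + 1)) := by
  have hshift := one_sub_mul_qPoch_mul (a * q) q (2 * t + k + 1)
  have h1 := one_sub_mul_ne_zero ha
  have h2 := one_sub_mul_pow_ne_zero ha (2 * t).succ_pos
  have h3 : 1 - q * q ^ k ≠ 0 :=
    sub_ne_zero.mpr (by rw [← pow_succ']; exact (hq _ k.succ_pos).symm)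
  have h4 := one_sub_mul_mul_pow_ne_zero ha (2 * t + k + 1)
  have hQ := qPoch_self_ne_zero hq k
  have hP := qPoch_mul_ne_zero ha (2 * t + k + 1)
  rw [show 2 * t + k + 2 = 2 * t + k + 1 + 1 by rfl, qPoch_succ q q k,
    qPoch_succ (a * q) q (2 * t + k + 1), eq_div_of_mul_eq h1 ((mul_comm _ _).trans hshift)]
  field_simp
  ring

include hq ha in
lemma sum_shiftDiff_div_eq (α : ℕ → ℂ) (n : ℕ) :
    ∑ t ∈ range (n + 1), shiftDiff (fun t => a * q ^ (2 * t + 1))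
        (fun t => (1 - a * q) / (1 - a * q ^ (2 * t + 1)) * α t) t /
          (qPoch q q (n - t) * qPoch (a * q) q (n + t)) =
      ∑ t ∈ range (n + 1), α t / (qPoch q q (n - t) * qPoch (a * q * q) q (n + t)) := by
  simp only [div_eq_mul_one_div (shiftDiff _ _ _)]
  rw [sum_shiftDiff_mul, sum_range_succ]
  congr 1
  · refine sum_congr rfl fun t ht => ?_
    obtain ⟨k, rfl⟩ : ∃ k, n = t + k + 1 := ⟨n - t - 1, by have := mem_range.mp ht; omega⟩
    rw [show t + k + 1 - t = k + 1 by omega, show t + k + 1 - (t + 1) = k by omega,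
      show t + k + 1 + t = 2 * t + k + 1 by omega,
      show t + k + 1 + (t + 1) = 2 * t + k + 2 by omega,
      mul_comm _ (α t), mul_assoc, weight_sub_weight_succ hq ha, mul_one_div]
  · have hdiag := one_sub_mul_qPoch_mul (a * q) q (n + n)
    have h1 := one_sub_mul_ne_zero ha
    have h2 := one_sub_mul_pow_ne_zero ha (2 * n).succ_pos
    have hP := qPoch_mul_ne_zero ha (n + n)
    rw [Nat.sub_self, qPoch_zero, one_mul, one_mul,
      eq_div_of_mul_eq h1 ((mul_comm _ _).trans hdiag),
      show a * q * q ^ (n + n) = a * q ^ (2 * n + 1) by ring]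
    field_simp

include hq ha in
lemma isBaileyPair_mul_iff (α β : ℕ → ℂ) :
    IsBaileyPair q (a * q) α β ↔
      IsBaileyPair q a (shiftDiff (fun t => a * q ^ (2 * t + 1))
        (fun t => (1 - a * q) / (1 - a * q ^ (2 * t + 1)) * α t)) β :=
  forall_congr' fun n => by rw [sum_shiftDiff_div_eq hq ha]

end BaseShift

theorem base_shift_general (q a : ℂ) (hq1 : ‖q‖ < 1)
    (ha : ∀ m : ℕ, 1 ≤ m → a * q ^ m ≠ 1)
    (α' β : ℕ → ℂ) (h : IsBaileyPair q a α' β) (α : ℕ → ℂ) :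
    (IsBaileyPair q (a * q) α β ↔
      ∀ n : ℕ, (1 - a * q) / (1 - a * q ^ (2 * n + 1)) * α n =
        ∑ r ∈ Finset.range (n + 1), a ^ (n - r) * q ^ (n ^ 2 - r ^ 2) * α' r) ∧
    ((∀ n : ℕ, (1 - a * q) / (1 - a * q ^ (2 * n + 1)) * α n =
        ∑ r ∈ Finset.range (n + 1), a ^ (n - r) * q ^ (n ^ 2 - r ^ 2) * α' r) ↔
      ((1 - a * q) / (1 - a * q ^ 1) * α 0 = α' 0 ∧
        ∀ n : ℕ, (1 - a * q) / (1 - a * q ^ (2 * (n + 1) + 1)) * α (n + 1) =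
          a * q ^ (2 * n + 1) * ((1 - a * q) / (1 - a * q ^ (2 * n + 1)) * α n)
            + α' (n + 1))) := by
  have hq : ∀ m : ℕ, 1 ≤ m → q ^ m ≠ 1 := fun m hm hqm => by
    have := congrArg norm hqm
    rw [norm_pow, norm_one] at this
    exact (pow_lt_one₀ (norm_nonneg q) hq1 (by omega)).ne this
  set x : ℕ → ℂ := fun n => (1 - a * q) / (1 - a * q ^ (2 * n + 1)) * α n
  have hrec := eq_sum_iff_recurrence a q x α'
  refine ⟨(isBaileyPair_mul_iff hq ha α β).trans (Iff.trans ?_ hrec.symm), hrec⟩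
  refine Iff.trans ?_ (shiftDiff_eq_iff (fun n => a * q ^ (2 * n + 1)) x α')
  exact ⟨fun h' => h'.unique (qPoch_mul_ne_zero ha) h, fun e => e ▸ h⟩

theorem base_shift (q a : ℂ) (hq0 : 0 < ‖q‖) (hq1 : ‖q‖ < 1)
    (ha : ∀ m : ℕ, 1 ≤ m → a * q ^ m ≠ 1)
    (α' β : ℕ → ℂ) (h : IsBaileyPair q a α' β) (α : ℕ → ℂ) :
    (IsBaileyPair q (a * q) α β ↔
      ∀ n : ℕ, (1 - a * q) / (1 - a * q ^ (2 * n + 1)) * α n =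
        ∑ r ∈ Finset.range (n + 1), a ^ (n - r) * q ^ (n ^ 2 - r ^ 2) * α' r) ∧
    ((∀ n : ℕ, (1 - a * q) / (1 - a * q ^ (2 * n + 1)) * α n =
        ∑ r ∈ Finset.range (n + 1), a ^ (n - r) * q ^ (n ^ 2 - r ^ 2) * α' r) ↔
      ((1 - a * q) / (1 - a * q ^ 1) * α 0 = α' 0 ∧
        ∀ n : ℕ, (1 - a * q) / (1 - a * q ^ (2 * (n + 1) + 1)) * α (n + 1) =
          a * q ^ (2 * n + 1) * ((1 - a * q) / (1 - a * q ^ (2 * n + 1)) * α n)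
            + α' (n + 1))) :=
  base_shift_general q a hq1 ha α' β h α
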